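/- arXiv:1211.0388 — 4 statements merged into one kernel-verified Lean document; each statement's English description precedes it below -/
import Mathlib

section
/- Let Q ⊆ ℝ^n be a rational polyhedron, let x ∈ Q, and let v ∈ ℤ^n be such that the halfline {x − t v : t ≥ 0} intersects Q_I. Let t̄ = min{t ≥ 0 : x − t v ∈ Q_I}. Then the CG rank of Q satisfies r(Q) ≥ ⌈t̄⌉. -/
open Set Pointwise

/-- Dot product of an integer vector with a real vector. -/
def zdot {n : ℕ} (c : Fin n → ℤ) (x : Fin n → ℝ) : ℝ := ∑ i, (c i : ℝ) * x i

/-- Dot product of two real vectors. -/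
def rdot {n : ℕ} (c x : Fin n → ℝ) : ℝ := ∑ i, c i * x i

/-- The integer points of `ℝ^n`. -/
def latticePts (n : ℕ) : Set (Fin n → ℝ) := {x | ∀ i, ∃ z : ℤ, x i = (z : ℝ)}

/-- A polyhedron: finite intersection of halfspaces. -/
def IsPolyhedron {n : ℕ} (Q : Set (Fin n → ℝ)) : Prop :=
  ∃ (m : ℕ) (A : Fin m → Fin n → ℝ) (b : Fin m → ℝ), Q = {x | ∀ i, rdot (A i) x ≤ b i}

/-- A rational polyhedron: the data `A`, `b` can be chosen rational. -/
def IsRatPolyhedron {n : ℕ} (Q : Set (Fin n → ℝ)) : Prop :=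
  ∃ (m : ℕ) (A : Fin m → Fin n → ℚ) (b : Fin m → ℚ),
    Q = {x | ∀ i, ∑ j, (A i j : ℝ) * x j ≤ (b i : ℝ)}

/-- The integer hull of a set: the convex hull of its integer points. -/
def intHull {n : ℕ} (Q : Set (Fin n → ℝ)) : Set (Fin n → ℝ) := convexHull ℝ (Q ∩ latticePts n)

/-- An integral polyhedron: a polyhedron equal to the convex hull of its integer points. -/
def IsIntegralPolyhedron {n : ℕ} (P : Set (Fin n → ℝ)) : Prop :=
  IsPolyhedron P ∧ P = intHull P

/-- The Chvátal–Gomory closure of a set. -/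
def cgClosure {n : ℕ} (Q : Set (Fin n → ℝ)) : Set (Fin n → ℝ) :=
  {x ∈ Q | ∀ (c : Fin n → ℤ) (δ : ℝ), (∀ y ∈ Q, zdot c y ≤ δ) → zdot c x ≤ (⌊δ⌋ : ℝ)}

/-- The `p`-th iterated CG closure. -/
def cgIter {n : ℕ} (p : ℕ) (Q : Set (Fin n → ℝ)) : Set (Fin n → ℝ) := cgClosure^[p] Q

/-- The CG rank: the least `p` with `Q^(p) = Q_I`, as an extended natural number
(`⊤` if no such `p` exists). -/
noncomputable def cgRank {n : ℕ} (Q : Set (Fin n → ℝ)) : ℕ∞ :=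
  sInf {p : ℕ∞ | ∃ m : ℕ, p = (m : ℕ∞) ∧ cgIter m Q = intHull Q}

/-- A relaxation of an integral polyhedron `P`: a rational polyhedron with the
same integer points. -/
def IsRelaxation {n : ℕ} (P Q : Set (Fin n → ℝ)) : Prop :=
  IsRatPolyhedron Q ∧ Q ∩ latticePts n = P ∩ latticePts n

/-- `r*(P) = +∞`: for every `p` some relaxation of `P` has CG rank larger than `p`. -/
def RStarInfinite {n : ℕ} (P : Set (Fin n → ℝ)) : Prop :=
  ∀ p : ℕ, ∃ Q : Set (Fin n → ℝ), IsRelaxation P Q ∧ (p : ℕ∞) < cgRank Q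

/-- The recession cone of a convex set. -/
def recCone {n : ℕ} (P : Set (Fin n → ℝ)) : Set (Fin n → ℝ) :=
  {v | ∀ x ∈ P, ∀ α : ℝ, 0 ≤ α → x + α • v ∈ P}

/-- The linear span `⟨v⟩` of a single vector, as a set. -/
def spanLine {n : ℕ} (v : Fin n → ℝ) : Set (Fin n → ℝ) := {w | ∃ t : ℝ, w = t • v}

/-- A set is relatively lattice-free if its relative interior contains no integer point. -/
def RelLatticeFree {n : ℕ} (C : Set (Fin n → ℝ)) : Prop :=
  intrinsicInterior ℝ C ∩ latticePts n = ∅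

/-- A set is lattice-free if its interior contains no integer point. -/
def LatticeFree {n : ℕ} (C : Set (Fin n → ℝ)) : Prop :=
  interior C ∩ latticePts n = ∅


lemma zdot_sub_smul {n : ℕ} (c : Fin n → ℤ) (x v : Fin n → ℝ) (t : ℝ) :
    zdot c (x - t • v) = zdot c x - t * zdot c v := by
  simp only [zdot, Pi.sub_apply, Pi.smul_apply, smul_eq_mul, mul_sub,
    Finset.sum_sub_distrib, Finset.mul_sum]
  congr 1
  exact Finset.sum_congr rfl fun j _ => by ring

lemma zdot_int {n : ℕ} (c : Fin n → ℤ) (z : Fin n → ℝ) (hz : z ∈ latticePts n) :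
    ∃ k : ℤ, zdot c z = (k : ℝ) := by
  choose f hf using hz
  exact ⟨∑ i, c i * f i, by simp [zdot, hf]⟩

lemma ratPoly_convex {n : ℕ} {Q : Set (Fin n → ℝ)} (hQ : IsRatPolyhedron Q) :
    Convex ℝ Q := by
  obtain ⟨m, A, b, rfl⟩ := hQ
  intro y hy z hz a b' ha hb hab
  intro i
  have h1 := hy i
  have h2 := hz i
  have : ∑ j, (A i j : ℝ) * (a • y + b' • z) j
      = a * (∑ j, (A i j : ℝ) * y j) + b' * (∑ j, (A i j : ℝ) * z j) := by
    simp [Finset.mul_sum, ← Finset.sum_add_distrib]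
    apply Finset.sum_congr rfl
    intro j _
    ring
  rw [this]
  calc a * (∑ j, (A i j : ℝ) * y j) + b' * (∑ j, (A i j : ℝ) * z j)
      ≤ a * (b i : ℝ) + b' * (b i : ℝ) := by
        apply add_le_add (mul_le_mul_of_nonneg_left h1 ha) (mul_le_mul_of_nonneg_left h2 hb)
    _ = (b i : ℝ) := by rw [← add_mul, hab, one_mul]

lemma cgClosure_subset {n : ℕ} (Q : Set (Fin n → ℝ)) : cgClosure Q ⊆ Q :=
  fun _ hx => hx.1

lemma lattice_mem_cgClosure {n : ℕ} {Q : Set (Fin n → ℝ)} {z : Fin n → ℝ}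
    (hzQ : z ∈ Q) (hz : z ∈ latticePts n) : z ∈ cgClosure Q := by
  refine ⟨hzQ, fun c δ h => ?_⟩
  obtain ⟨k, hk⟩ := zdot_int c z hz
  have : (k : ℝ) ≤ δ := hk ▸ h z hzQ
  rw [hk]
  exact_mod_cast Int.le_floor.mpr this

lemma cgIter_subset {n : ℕ} (Q : Set (Fin n → ℝ)) (p : ℕ) : cgIter p Q ⊆ Q := by
  induction p with
  | zero => exact fun _ h => h
  | succ p ih =>
      intro y hy
      rw [cgIter, Function.iterate_succ_apply'] at hy
      exact ih (cgClosure_subset _ hy)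

lemma lattice_mem_cgIter {n : ℕ} {Q : Set (Fin n → ℝ)} {z : Fin n → ℝ}
    (hzQ : z ∈ Q) (hz : z ∈ latticePts n) (p : ℕ) : z ∈ cgIter p Q := by
  induction p with
  | zero => exact hzQ
  | succ p ih =>
      rw [cgIter, Function.iterate_succ_apply']
      exact lattice_mem_cgClosure ih hz

lemma key_segment {n : ℕ} {Q : Set (Fin n → ℝ)} (hconv : Convex ℝ Q)
    {x : Fin n → ℝ} (hx : x ∈ Q) {v : Fin n → ℝ} (hv : v ∈ latticePts n)
    {tbar : ℝ} (ht0 : 0 ≤ tbar) (hI : x - tbar • v ∈ intHull Q) :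
    ∀ p : ℕ, ∀ s : ℝ, (p : ℝ) ≤ s → s ≤ tbar → x - s • v ∈ cgIter p Q := by
  have hIQ : intHull Q ⊆ Q := convexHull_min Set.inter_subset_left hconv
  have hbase : ∀ s : ℝ, 0 ≤ s → s ≤ tbar → x - s • v ∈ Q := by
    intro s hs0 hs1
    rcases eq_or_lt_of_le ht0 with h | h
    · have hs : s = 0 := le_antisymm (h ▸ hs1) hs0
      simpa [hs] using hx
    · have hmem := hconv hx (hIQ hI) (a := 1 - s / tbar) (b := s / tbar)
        (by rw [sub_nonneg]; exact div_le_one_of_le₀ hs1 (le_of_lt h))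
        (div_nonneg hs0 (le_of_lt h)) (by ring)
      have heq : (1 - s / tbar) • x + (s / tbar) • (x - tbar • v) = x - s • v := by
        funext i
        simp only [Pi.add_apply, Pi.smul_apply, Pi.sub_apply, smul_eq_mul]
        field_simp
        ring
      rwa [heq] at hmem
  intro p
  induction p with
  | zero => exact fun s hs0 hs1 => hbase s (by exact_mod_cast hs0) hs1
  | succ p ih =>
      intro s hs0 hs1
      have hps : (p : ℝ) ≤ s := by push_cast at hs0 ⊢; linarith
      rw [cgIter, Function.iterate_succ_apply']
      refine ⟨ih s hps hs1, fun c δ hcδ => ?_⟩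
      obtain ⟨k, hk⟩ := zdot_int c v hv
      by_cases hkpos : 1 ≤ k
      · have hps' : (p : ℝ) ≤ s - 1 := by push_cast at hs0 ⊢; linarith
        have h1 : x - (s - 1) • v ∈ cgIter p Q := ih (s - 1) hps' (by linarith)
        have h2 : zdot c (x - (s - 1) • v) ≤ δ := hcδ _ h1
        rw [zdot_sub_smul] at h2 ⊢
        have hfl : δ - 1 < (⌊δ⌋ : ℝ) + 1 - 1 := by
          have := Int.lt_floor_add_one δ; linarith
        have hk1 : (1 : ℝ) ≤ (k : ℝ) := by exact_mod_cast hkpos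
        rw [hk] at h2 ⊢
        nlinarith
      · push_neg at hkpos
        have hk0 : (k : ℝ) ≤ 0 := by exact_mod_cast Int.lt_add_one_iff.mp hkpos
        -- the CG cut is valid on the integer hull
        have hcut : ∀ y ∈ intHull Q, zdot c y ≤ (⌊δ⌋ : ℝ) := by
          intro y hy
          have hconvH : Convex ℝ {w : Fin n → ℝ | zdot c w ≤ (⌊δ⌋ : ℝ)} := by
            intro w1 h1 w2 h2 a b ha hb hab
            have : zdot c (a • w1 + b • w2) = a * zdot c w1 + b * zdot c w2 := by
              simp [zdot, Finset.mul_sum, ← Finset.sum_add_distrib]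
              apply Finset.sum_congr rfl
              intro j _
              ring
            simp only [Set.mem_setOf_eq] at h1 h2 ⊢
            rw [this]
            calc a * zdot c w1 + b * zdot c w2 ≤ a * (⌊δ⌋ : ℝ) + b * (⌊δ⌋ : ℝ) :=
                  add_le_add (mul_le_mul_of_nonneg_left h1 ha)
                    (mul_le_mul_of_nonneg_left h2 hb)
              _ = (⌊δ⌋ : ℝ) := by rw [← add_mul, hab, one_mul]
          have hsub : Q ∩ latticePts n ⊆ {w : Fin n → ℝ | zdot c w ≤ (⌊δ⌋ : ℝ)} := by
            intro z hz
            obtain ⟨kz, hkz⟩ := zdot_int c z hz.2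
            have : zdot c z ≤ δ := hcδ z (lattice_mem_cgIter hz.1 hz.2 p)
            show zdot c z ≤ ((⌊δ⌋ : ℤ) : ℝ)
            rw [hkz] at this ⊢
            exact_mod_cast Int.le_floor.mpr this
          exact convexHull_min hsub hconvH hy
        have hb := hcut _ hI
        rw [zdot_sub_smul] at hb ⊢
        rw [hk] at hb ⊢
        have hmul : (tbar - s) * (k : ℝ) ≤ 0 :=
          mul_nonpos_of_nonneg_of_nonpos (by linarith) hk0
        nlinarith

theorem stmt_2 {n : ℕ} (Q : Set (Fin n → ℝ)) (hQ : IsRatPolyhedron Q)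
    (x : Fin n → ℝ) (hx : x ∈ Q) (v : Fin n → ℝ) (hv : v ∈ latticePts n)
    (tbar : ℝ) (htbar : IsLeast {t : ℝ | 0 ≤ t ∧ x - t • v ∈ intHull Q} tbar) :
    ((⌈tbar⌉.toNat : ℕ∞)) ≤ cgRank Q := by
  have hconv : Convex ℝ Q := ratPoly_convex hQ
  obtain ⟨⟨ht0, hI⟩, hleast⟩ := htbar
  refine le_sInf ?_
  rintro p ⟨m, rfl, hm⟩
  have hmr : tbar ≤ (m : ℝ) := by
    by_contra hcon
    push_neg at hcon
    have hmem : x - (m : ℝ) • v ∈ cgIter m Q :=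
      key_segment hconv hx hv ht0 hI m (m : ℝ) le_rfl (le_of_lt hcon)
    rw [hm] at hmem
    have : tbar ≤ (m : ℝ) := hleast ⟨by positivity, hmem⟩
    linarith
  have h1 : ⌈tbar⌉ ≤ (m : ℤ) := Int.ceil_le.mpr (by exact_mod_cast hmr)
  have h2 : ⌈tbar⌉.toNat ≤ m := by
    omega
  exact_mod_cast h2
end

section
/- Let Q ⊆ ℝ^n be a rational polyhedron, x ∈ Q, v ∈ ℝ^n, p ∈ ℕ, and for j ∈ {1,…,p} set x^j = x − j·v. Assume that for all j ∈ {1,…,p} and for every inequality c·x ≤ δ that is valid for Q_I with c ∈ ℤ^n and c·v < 1, one has c·x^j ≤ δ. Then x^j ∈ Q^(j) for all j ∈ {1,…,p}. -/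
open Set Pointwise

lemma isLinearMap_dot {n : ℕ} (a : Fin n → ℝ) :
    IsLinearMap ℝ (fun x : Fin n → ℝ => ∑ j, a j * x j) := by
  constructor
  · intro x y
    simp [Pi.add_apply, mul_add, Finset.sum_add_distrib]
  · intro t x
    simp only [Pi.smul_apply, smul_eq_mul, Finset.mul_sum]
    exact Finset.sum_congr rfl fun i _ => by ring

lemma zdot_int_on_lattice {n : ℕ} (c : Fin n → ℤ) {z : Fin n → ℝ} (hz : z ∈ latticePts n) :
    ∃ m : ℤ, zdot c z = (m : ℝ) := by
  choose f hf using hz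
  refine ⟨∑ i, c i * f i, ?_⟩
  unfold zdot
  push_cast
  exact Finset.sum_congr rfl fun i _ => by rw [hf i]

lemma intHull_floor {n : ℕ} (Q : Set (Fin n → ℝ)) (c : Fin n → ℤ) (δ : ℝ)
    (hv : ∀ y ∈ intHull Q, zdot c y ≤ δ) : ∀ y ∈ intHull Q, zdot c y ≤ ((⌊δ⌋ : ℤ) : ℝ) := by
  intro y hy
  have hsub : Q ∩ latticePts n ⊆ {w : Fin n → ℝ | zdot c w ≤ ((⌊δ⌋ : ℤ) : ℝ)} := by
    intro z hz
    obtain ⟨m, hm⟩ := zdot_int_on_lattice c hz.2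
    have h1 : zdot c z ≤ δ := hv z (subset_convexHull ℝ _ hz)
    show zdot c z ≤ ((⌊δ⌋ : ℤ) : ℝ)
    rw [hm] at h1 ⊢
    exact_mod_cast Int.le_floor.mpr (by exact_mod_cast h1)
  have hconv : Convex ℝ {w : Fin n → ℝ | zdot c w ≤ ((⌊δ⌋ : ℤ) : ℝ)} :=
    convex_halfSpace_le (isLinearMap_dot fun i => (c i : ℝ)) _
  exact convexHull_min hsub hconv hy

lemma intHull_subset_cgIter {n : ℕ} {Q : Set (Fin n → ℝ)} (hQ : IsRatPolyhedron Q) :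
    ∀ k, intHull Q ⊆ cgIter k Q := by
  intro k
  induction k with
  | zero => exact convexHull_min inter_subset_left (ratPoly_convex hQ)
  | succ k ih =>
    intro y hy
    have hstep : cgIter (k + 1) Q = cgClosure (cgIter k Q) := Function.iterate_succ_apply' _ _ _
    rw [hstep]
    exact ⟨ih hy, fun c δ hval => intHull_floor Q c δ (fun z hz => hval z (ih hz)) y hy⟩

lemma exists_int_scale {n : ℕ} (q : Fin n → ℚ) :
    ∃ (N : ℕ) (c : Fin n → ℤ), 0 < N ∧ ∀ j, ((c j : ℚ)) = q j * N := by
  refine ⟨∏ k, (q k).den, fun j => (q j).num * ∏ k ∈ Finset.univ.erase j, ((q k).den : ℤ),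
    Finset.prod_pos fun k _ => (q k).pos, fun j => ?_⟩
  have hden : ((q j).den : ℚ) ≠ 0 := Nat.cast_ne_zero.mpr (q j).den_nz
  have h2 : q j * ((q j).den : ℚ) = ((q j).num : ℚ) := by
    have h3 := Rat.num_div_den (q j)
    rw [div_eq_iff hden] at h3
    exact h3.symm
  have h1 : (∏ k, ((q k).den : ℚ)) = ((q j).den : ℚ) * ∏ k ∈ Finset.univ.erase j, ((q k).den : ℚ) :=
    (Finset.mul_prod_erase _ _ (Finset.mem_univ j)).symm
  push_cast
  rw [h1, ← mul_assoc, h2]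

theorem stmt_3 {n : ℕ} (Q : Set (Fin n → ℝ)) (hQ : IsRatPolyhedron Q)
    (x : Fin n → ℝ) (hx : x ∈ Q) (v : Fin n → ℝ) (p : ℕ)
    (h : ∀ j ∈ Finset.Icc 1 p, ∀ (c : Fin n → ℤ) (δ : ℝ),
      (∀ y ∈ intHull Q, zdot c y ≤ δ) → zdot c v < 1 → zdot c (x - (j : ℝ) • v) ≤ δ) :
    ∀ j ∈ Finset.Icc 1 p, x - (j : ℝ) • v ∈ cgIter j Q := by
  have hIH := intHull_subset_cgIter hQ
  have hIQ : intHull Q ⊆ Q := convexHull_min inter_subset_left (ratPoly_convex hQ)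
  obtain ⟨m, A, b, hQeq⟩ := hQ
  -- base: all the points x - j • v lie in Q
  have base : ∀ j, j ≤ p → x - (j : ℝ) • v ∈ Q := by
    intro j
    induction j with
    | zero => intro _; simpa using hx
    | succ j ihj =>
      intro hjp
      have hxj : x - (j : ℝ) • v ∈ Q := ihj (Nat.le_of_succ_le hjp)
      rw [hQeq]
      intro i
      obtain ⟨N, c, hN, hc⟩ := exists_int_scale (A i)
      have hcR : ∀ l, ((c l : ℝ)) = (A i l : ℝ) * N := by
        intro l
        exact_mod_cast congrArg (fun r : ℚ => (r : ℝ)) (hc l)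
      have hzdot : ∀ y : Fin n → ℝ, zdot c y = N * ∑ l, (A i l : ℝ) * y l := by
        intro y
        rw [zdot, Finset.mul_sum]
        exact Finset.sum_congr rfl fun l _ => by rw [hcR l]; ring
      have hNpos : (0 : ℝ) < N := by exact_mod_cast hN
      have hvalid : ∀ y ∈ Q, zdot c y ≤ N * b i := by
        intro y hy
        rw [hzdot]
        have hyi : ∑ l, (A i l : ℝ) * y l ≤ b i := by rw [hQeq] at hy; exact hy i
        exact mul_le_mul_of_nonneg_left hyi hNpos.le
      have hle : zdot c (x - ((j + 1 : ℕ) : ℝ) • v) ≤ N * b i := by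
        by_cases hcv : zdot c v < 1
        · exact h (j + 1) (Finset.mem_Icc.mpr ⟨Nat.succ_le_succ (Nat.zero_le _), hjp⟩) c
            (N * b i) (fun y hy => hvalid y (hIQ hy)) hcv
        · push_neg at hcv
          have h1 : zdot c (x - (j : ℝ) • v) ≤ N * b i := hvalid _ hxj
          rw [zdot_sub_smul] at h1 ⊢
          push_cast
          push_cast at h1
          linarith
      rw [hzdot] at hle
      exact le_of_mul_le_mul_left hle hNpos
  have key : ∀ k j, k ≤ j → j ≤ p → x - (j : ℝ) • v ∈ cgIter k Q := by
    intro k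
    induction k with
    | zero =>
      intro j _ hjp
      simpa [cgIter] using base j hjp
    | succ k ihk =>
      intro j hkj hjp
      have hstep : cgIter (k + 1) Q = cgClosure (cgIter k Q) := Function.iterate_succ_apply' _ _ _
      rw [hstep]
      refine ⟨ihk j (Nat.le_of_succ_le hkj) hjp, fun c δ hval => ?_⟩
      by_cases hcv : zdot c v < 1
      · have hvI : ∀ y ∈ intHull Q, zdot c y ≤ δ := fun y hy => hval y (hIH k hy)
        exact h j (Finset.mem_Icc.mpr ⟨le_trans (Nat.succ_le_succ (Nat.zero_le _)) hkj, hjp⟩) c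
          ((⌊δ⌋ : ℤ) : ℝ) (intHull_floor Q c δ hvI) hcv
      · push_neg at hcv
        have hxj1 := ihk (j - 1) (by omega) (by omega)
        have h1 : zdot c (x - ((j - 1 : ℕ) : ℝ) • v) ≤ δ := hval _ hxj1
        have hcast : ((j - 1 : ℕ) : ℝ) = (j : ℝ) - 1 := by
          rw [Nat.cast_sub (by omega)]
          simp
        have hfl : δ - 1 ≤ ((⌊δ⌋ : ℤ) : ℝ) := by
          have := Int.sub_one_lt_floor δ
          linarith
        rw [zdot_sub_smul] at h1 ⊢
        rw [hcast] at h1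
        linarith
  intro j hj
  rw [Finset.mem_Icc] at hj
  exact key j j le_rfl hj.2
end

section
/- Let C ⊆ ℝ^n be a convex set contained in a rational hyperplane (a set {x ∈ ℝ^n : a·x = β} with a ∈ ℚ^n \ {0}, β ∈ ℚ) and such that aff(C) ∩ ℤ^n ≠ ∅. Then C is relatively lattice-free if and only if there exists v ∈ ℤ^n \ rec(C) such that C + ⟨v⟩ is relatively lattice-free. -/
open Set Pointwise

/-
Scale the rational normal `a` to a primitive integer vector `b` and pick, by Bézout, an integer
`v` with `b ⬝ᵥ v = 1`. The functional `f = b ⬝ᵥ ·` is constant, say `r`, on `C`, so the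
projection `x ↦ x - (f x - r) • v` along `v` retracts `C + ⟨v⟩` onto `C`, and a point is in the
relative interior of `C + ⟨v⟩` iff its projection is in that of `C`. As `aff C` meets `ℤⁿ`, `r` is
an integer, so this projection maps lattice points to lattice points; and `f v = 1` keeps `v`
out of the recession cone. Conversely, the relative interior of `C` lies in that of `C + ⟨v⟩` for
every `v` (when `v` is parallel to `aff C` the two sets have the same affine span, otherwise we
are in the transverse situation above).
-/

section IntrinsicInterior

variable {𝕜 V W P Q : Type*} [Ring 𝕜] [AddCommGroup V] [Module 𝕜 V] [TopologicalSpace P]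
  [AddTorsor V P] [AddCommGroup W] [Module 𝕜 W] [TopologicalSpace Q] [AddTorsor W Q]

theorem mem_intrinsicInterior_of_mapsTo {s : Set P} {t : Set Q} {g : P → Q} {z : P}
    (hg : Continuous g) (hz : z ∈ affineSpan 𝕜 s)
    (hmaps : MapsTo g (affineSpan 𝕜 s) (affineSpan 𝕜 t))
    (hst : ∀ y ∈ affineSpan 𝕜 s, g y ∈ t → y ∈ s) (hgz : g z ∈ intrinsicInterior 𝕜 t) :
    z ∈ intrinsicInterior 𝕜 s := by
  obtain ⟨w, hw, hwz⟩ := hgz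
  set G : affineSpan 𝕜 s → affineSpan 𝕜 t := hmaps.restrict g _ _
  have hG : Continuous G := (hg.comp continuous_subtype_val).subtype_mk _
  have hGz : G ⟨z, hz⟩ = w := Subtype.ext hwz.symm
  refine ⟨⟨z, hz⟩, interior_mono (fun (y : affineSpan 𝕜 s) hy => hst y y.2 hy) ?_, rfl⟩
  exact preimage_interior_subset_interior_preimage hG (by rwa [mem_preimage, hGz])

end IntrinsicInterior

theorem AffineMap.apply_eq_of_mem_affineSpan {k V₁ P₁ V₂ P₂ : Type*} [Ring k]
    [AddCommGroup V₁] [Module k V₁] [AddTorsor V₁ P₁] [AddCommGroup V₂] [Module k V₂]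
    [AddTorsor V₂ P₂] (φ : P₁ →ᵃ[k] P₂) {s : Set P₁} {q : P₂} (h : ∀ x ∈ s, φ x = q)
    {y : P₁} (hy : y ∈ affineSpan k s) : φ y = q := by
  have hφy : φ y ∈ affineSpan k (φ '' s) := by
    rw [← AffineSubspace.map_span]
    exact AffineSubspace.mem_map.2 ⟨y, hy, rfl⟩
  have hsub : φ '' s ⊆ {q} := by
    rintro _ ⟨x, hx, rfl⟩
    exact h x hx
  exact (AffineSubspace.mem_affineSpan_singleton _ _).1 (affineSpan_mono k hsub hφy)

variable {n : ℕ}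

theorem mem_add_spanLine {C : Set (Fin n → ℝ)} {v x : Fin n → ℝ} :
    x ∈ C + spanLine v ↔ ∃ c ∈ C, ∃ t : ℝ, x = c + t • v := by
  constructor
  · rintro ⟨c, hc, _, ⟨t, rfl⟩, rfl⟩
    exact ⟨c, hc, t, rfl⟩
  · rintro ⟨c, hc, t, rfl⟩
    exact ⟨c, hc, t • v, ⟨t, rfl⟩, rfl⟩

theorem subset_add_spanLine (C : Set (Fin n → ℝ)) (v : Fin n → ℝ) : C ⊆ C + spanLine v :=
  fun x hx => mem_add_spanLine.2 ⟨x, hx, 0, by simp⟩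

theorem add_smul_mem_affineSpan_add_spanLine {C : Set (Fin n → ℝ)} {v y : Fin n → ℝ}
    (hy : y ∈ affineSpan ℝ (C + spanLine v)) (t : ℝ) :
    y + t • v ∈ affineSpan ℝ (C + spanLine v) := by
  obtain ⟨x, hx⟩ := (affineSpan_nonempty ℝ).1 ⟨y, hy⟩
  obtain ⟨c, hc, -⟩ := mem_add_spanLine.1 hx
  have hcv : c + v ∈ C + spanLine v := mem_add_spanLine.2 ⟨c, hc, 1, by rw [one_smul]⟩
  have hv : v ∈ (affineSpan ℝ (C + spanLine v)).direction := by
    simpa using AffineSubspace.vsub_mem_direction (subset_affineSpan ℝ _ hcv)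
      (subset_affineSpan ℝ _ (subset_add_spanLine C v hc))
  simpa [add_comm] using AffineSubspace.vadd_mem_of_mem_direction
    (Submodule.smul_mem _ t hv) hy

def lineProj (f : (Fin n → ℝ) →ₗ[ℝ] ℝ) (r : ℝ) (v : Fin n → ℝ) :
    (Fin n → ℝ) →ᵃ[ℝ] (Fin n → ℝ) :=
  (LinearMap.id - f.smulRight v).toAffineMap + AffineMap.const ℝ _ (r • v)

@[simp]
theorem lineProj_apply (f : (Fin n → ℝ) →ₗ[ℝ] ℝ) (r : ℝ) (v x : Fin n → ℝ) :
    lineProj f r v x = x - (f x - r) • v := by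
  simp only [lineProj, AffineMap.coe_add, LinearMap.coe_toAffineMap, AffineMap.coe_const,
    Pi.add_apply, LinearMap.sub_apply, LinearMap.id_coe, id_eq, LinearMap.coe_smulRight,
    Function.const_apply, sub_smul]
  abel

section Transverse

variable {C : Set (Fin n → ℝ)} {f : (Fin n → ℝ) →ₗ[ℝ] ℝ} {r : ℝ} {v : Fin n → ℝ}

theorem lineProj_add_smul (hfv : f v = 1) {y : Fin n → ℝ} (hy : f y = r) (t : ℝ) :
    lineProj f r v (y + t • v) = y := by
  simp [hfv, hy]

theorem mem_add_spanLine_of_lineProj_mem {y : Fin n → ℝ} (hy : lineProj f r v y ∈ C) :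
    y ∈ C + spanLine v :=
  mem_add_spanLine.2 ⟨_, hy, f y - r, by simp⟩

variable (hfv : f v = 1) (hCf : ∀ x ∈ C, f x = r)
include hfv hCf

theorem mapsTo_lineProj_affineSpan_add_spanLine :
    MapsTo (lineProj f r v) (affineSpan ℝ (C + spanLine v)) (affineSpan ℝ C) := by
  intro y hy
  have hP : lineProj f r v '' (C + spanLine v) ⊆ C := by
    rintro _ ⟨x, hx, rfl⟩
    obtain ⟨c, hc, t, rfl⟩ := mem_add_spanLine.1 hx
    rwa [lineProj_add_smul hfv (hCf c hc)]
  refine affineSpan_mono ℝ hP ?_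
  rw [← AffineSubspace.map_span]
  exact AffineSubspace.mem_map.2 ⟨y, hy, rfl⟩

theorem mem_intrinsicInterior_add_spanLine_iff {z : Fin n → ℝ} :
    z ∈ intrinsicInterior ℝ (C + spanLine v) ↔ lineProj f r v z ∈ intrinsicInterior ℝ C := by
  constructor
  · intro hz
    obtain ⟨c, hc, t, rfl⟩ := mem_add_spanLine.1 (intrinsicInterior_subset hz)
    rw [lineProj_add_smul hfv (hCf c hc)]
    refine mem_intrinsicInterior_of_mapsTo (g := (· + t • v)) (by fun_prop)
      (subset_affineSpan ℝ _ hc) (fun y hy => ?_) (fun y hy hyt => ?_) hz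
    · exact add_smul_mem_affineSpan_add_spanLine (affineSpan_mono ℝ (subset_add_spanLine C v) hy) t
    · obtain ⟨c', hc', t', hyc'⟩ := mem_add_spanLine.1 hyt
      have := congrArg (lineProj f r v) hyc'
      rw [lineProj_add_smul hfv (f.toAffineMap.apply_eq_of_mem_affineSpan hCf hy),
        lineProj_add_smul hfv (hCf c' hc')] at this
      rwa [this]
  · intro hz
    exact mem_intrinsicInterior_of_mapsTo (lineProj f r v).continuous_of_finiteDimensional
      (subset_affineSpan ℝ _ (mem_add_spanLine_of_lineProj_mem (intrinsicInterior_subset hz)))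
      (mapsTo_lineProj_affineSpan_add_spanLine hfv hCf)
      (fun _ _ hy => mem_add_spanLine_of_lineProj_mem hy) hz

theorem notMem_recCone (hC : C.Nonempty) : v ∉ recCone C := by
  intro hv
  obtain ⟨x, hx⟩ := hC
  have := hCf _ (hv x hx 1 zero_le_one)
  simp [hfv, hCf x hx] at this

end Transverse

theorem intrinsicInterior_subset_intrinsicInterior_add_spanLine (C : Set (Fin n → ℝ))
    (v : Fin n → ℝ) : intrinsicInterior ℝ C ⊆ intrinsicInterior ℝ (C + spanLine v) := by
  intro z hz
  have hzC := intrinsicInterior_subset hz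
  by_cases hv : v ∈ (affineSpan ℝ C).direction
  · have hS : C + spanLine v ⊆ affineSpan ℝ C := by
      intro x hx
      obtain ⟨c, hc, t, rfl⟩ := mem_add_spanLine.1 hx
      simpa [add_comm] using AffineSubspace.vadd_mem_of_mem_direction
        (Submodule.smul_mem _ t hv) (subset_affineSpan ℝ _ hc)
    exact mem_intrinsicInterior_of_mapsTo (g := id) continuous_id
      (subset_affineSpan ℝ _ (subset_add_spanLine C v hzC)) (fun y hy => affineSpan_le.2 hS hy)
      (fun y _ hy => subset_add_spanLine C v hy) hz
  · obtain ⟨φ, hφv, hφD⟩ := Submodule.exists_dual_map_eq_bot_of_notMem hv inferInstance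
    set f := (φ v)⁻¹ • φ
    have hfv : f v = 1 := inv_mul_cancel₀ hφv
    have hCf : ∀ x ∈ C, f x = f z := by
      intro x hx
      have hxz : x - z ∈ (affineSpan ℝ C).direction :=
        AffineSubspace.vsub_mem_direction (subset_affineSpan ℝ _ hx) (subset_affineSpan ℝ _ hzC)
      have : φ (x - z) = 0 := by
        simpa [hφD] using Submodule.mem_map_of_mem (f := φ) hxz
      rw [map_sub, sub_eq_zero] at this
      simp only [f, LinearMap.smul_apply, this]
    rw [mem_intrinsicInterior_add_spanLine_iff hfv hCf]
    simpa using hz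

theorem intCast_mem_latticePts (c : Fin n → ℤ) : (fun i => (c i : ℝ)) ∈ latticePts n :=
  fun i => ⟨c i, rfl⟩

theorem sub_intCast_smul_mem_latticePts {x v : Fin n → ℝ} (hx : x ∈ latticePts n)
    (hv : v ∈ latticePts n) (m : ℤ) : x - (m : ℝ) • v ∈ latticePts n := by
  intro i
  obtain ⟨p, hp⟩ := hx i
  obtain ⟨q, hq⟩ := hv i
  exact ⟨p - m * q, by simp [hp, hq]⟩

theorem exists_intCast_eq_dotProduct (b : Fin n → ℤ) {x : Fin n → ℝ} (hx : x ∈ latticePts n) :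
    ∃ m : ℤ, (fun i => (b i : ℝ)) ⬝ᵥ x = m := by
  choose p hp using hx
  exact ⟨b ⬝ᵥ p, by simp [dotProduct, hp]⟩

theorem RelLatticeFree.add_spanLine {C : Set (Fin n → ℝ)} {f : (Fin n → ℝ) →ₗ[ℝ] ℝ} {k : ℤ}
    {v : Fin n → ℝ} (hv : v ∈ latticePts n) (hfv : f v = 1) (hCf : ∀ x ∈ C, f x = k)
    (hf : ∀ z ∈ latticePts n, ∃ m : ℤ, f z = m) (h : RelLatticeFree C) :
    RelLatticeFree (C + spanLine v) := by
  refine eq_empty_of_forall_notMem fun z ⟨hz, hzL⟩ => ?_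
  rw [mem_intrinsicInterior_add_spanLine_iff hfv hCf] at hz
  obtain ⟨m, hm⟩ := hf z hzL
  have hPz : lineProj f k v z ∈ latticePts n := by
    simpa [hm] using sub_intCast_smul_mem_latticePts hzL hv (m - k)
  exact h.subset ⟨hz, hPz⟩

theorem exists_primitive_multiple (a : Fin n → ℚ) (ha : a ≠ 0) :
    ∃ (b c : Fin n → ℤ) (q : ℚ), (∀ i, (b i : ℚ) = q * a i) ∧ b ⬝ᵥ c = 1 := by
  obtain ⟨d, hd⟩ := IsLocalization.exist_integer_multiples_of_finite (nonZeroDivisors ℤ) a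
  choose b₀ hb₀ using hd
  obtain ⟨i₀, hi₀⟩ : ∃ i, a i ≠ 0 := by simpa [funext_iff] using ha
  obtain ⟨b, hb, hgcd⟩ := Finset.extract_gcd b₀ ⟨i₀, Finset.mem_univ i₀⟩
  obtain ⟨c, hc⟩ := Finset.univ.gcd_eq_sum_mul b
  set g := Finset.univ.gcd b₀
  have hg : g ≠ 0 := by
    intro hg
    have h0 := hb₀ i₀
    rw [(Finset.gcd_eq_zero_iff.1 hg) i₀ (Finset.mem_univ i₀)] at h0
    simp [nonZeroDivisors.coe_ne_zero d, hi₀] at h0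
  refine ⟨b, c, (d : ℚ) / g, fun i => ?_, by rw [dotProduct, ← hc, hgcd]⟩
  have h := hb₀ i
  rw [hb i (Finset.mem_univ i)] at h
  simp only [algebraMap_int_eq, eq_intCast, Int.cast_mul, zsmul_eq_mul] at h
  field_simp
  linarith

theorem stmt_5_general {n : ℕ} (C : Set (Fin n → ℝ))
    (a : Fin n → ℚ) (ha : a ≠ 0) (β : ℚ)
    (hsub : C ⊆ {x : Fin n → ℝ | ∑ i, (a i : ℝ) * x i = (β : ℝ)})
    (haff : ((affineSpan ℝ C : Set (Fin n → ℝ)) ∩ latticePts n).Nonempty) :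
    RelLatticeFree C ↔
      ∃ v : Fin n → ℝ, v ∈ latticePts n ∧ v ∉ recCone C ∧
        RelLatticeFree (C + spanLine v) := by
  obtain ⟨z₀, hz₀A, hz₀L⟩ := haff
  obtain ⟨b, c, q, hba, hbc⟩ := exists_primitive_multiple a ha
  set f := dotProductBilin ℝ ℝ (fun i => (b i : ℝ))
  have hfL : ∀ z ∈ latticePts n, ∃ m : ℤ, f z = m := fun z hz => exists_intCast_eq_dotProduct b hz
  have hCq : ∀ x ∈ C, f x = q * β := by
    intro x hx
    show ∑ i, (b i : ℝ) * x i = q * β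
    rw [← (hsub hx : ∑ i, (a i : ℝ) * x i = β), Finset.mul_sum]
    refine Finset.sum_congr rfl fun i _ => ?_
    rw [show (b i : ℝ) = q * a i by exact_mod_cast hba i, mul_assoc]
  obtain ⟨k, hk⟩ := hfL z₀ hz₀L
  have hCk : ∀ x ∈ C, f x = k := fun x hx =>
    (hCq x hx).trans ((f.toAffineMap.apply_eq_of_mem_affineSpan hCq hz₀A).symm.trans hk)
  have hfc : f (fun i => (c i : ℝ)) = 1 := by
    simpa [f, dotProduct] using congrArg (Int.cast : ℤ → ℝ) hbc
  constructor
  · intro h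
    exact ⟨_, intCast_mem_latticePts c,
      notMem_recCone hfc hCk ((affineSpan_nonempty ℝ).1 ⟨z₀, hz₀A⟩),
      h.add_spanLine (intCast_mem_latticePts c) hfc hCk hfL⟩
  · rintro ⟨v, -, -, h⟩
    have hrelint := intrinsicInterior_subset_intrinsicInterior_add_spanLine C v
    exact eq_empty_of_subset_empty ((inter_subset_inter_left _ hrelint).trans h.subset)

theorem stmt_5 {n : ℕ} (C : Set (Fin n → ℝ)) (hC : Convex ℝ C)
    (a : Fin n → ℚ) (ha : a ≠ 0) (β : ℚ)
    (hsub : C ⊆ {x : Fin n → ℝ | ∑ i, (a i : ℝ) * x i = (β : ℝ)})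
    (haff : ((affineSpan ℝ C : Set (Fin n → ℝ)) ∩ latticePts n).Nonempty) :
    RelLatticeFree C ↔
      ∃ v : Fin n → ℝ, v ∈ latticePts n ∧ v ∉ recCone C ∧
        RelLatticeFree (C + spanLine v) :=
  stmt_5_general C a ha β hsub haff
end

section
/- For every integer k ≥ 1, let P_k = {x ∈ ℝ² : x₁ ≥ 0, x₂ ≥ 0, x₂ ≤ k, x₁ − (1/k)x₂ ≤ 1} and let Q_k = conv(P_k ∪ {(1/2, −k/2)}). Then P_k is an integral polytope, Q_k is a relaxation of P_k, and the CG rank of Q_k satisfies r(Q_k) ≥ k/2. Consequently r*(P_k) ≥ k/2, so any upper bound on the reverse CG rank of integral polytopes that are not relatively lattice-free must grow with the number of integer points in their interior. -/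
open Set Pointwise

/-- The polytope `P_k = {x ∈ ℝ² : x₁ ≥ 0, x₂ ≥ 0, x₂ ≤ k, x₁ - (1/k)x₂ ≤ 1}`. -/
def Pk (k : ℕ) : Set (Fin 2 → ℝ) :=
  {x | 0 ≤ x 0 ∧ 0 ≤ x 1 ∧ x 1 ≤ (k : ℝ) ∧ x 0 - (1 / (k : ℝ)) * x 1 ≤ 1}

/-- The relaxation `Q_k = conv(P_k ∪ {(1/2, -k/2)})`. -/
def Qk (k : ℕ) : Set (Fin 2 → ℝ) :=
  convexHull ℝ (Pk k ∪ {![1 / 2, -(k : ℝ) / 2]})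

/-! `Q_k` adds to the trapezoid `P_k` the triangle with vertices `(0,0)`, `(1,0)`, `(1/2, -k/2)`,
which contains no new integer point, so `Q_k` is a relaxation of `P_k` with integer hull `P_k`.
A CG round can raise the lowest surviving point of the vertical line `x₁ = 1/2` by at most one:
`(1/2, s)` survives as soon as `(1/2, s - 1)` did, because a cut `c ⬝ x ≤ ⌊δ⌋` with `c₂ ≥ 0` is
implied at `(1/2, s)` by its values at the integer points `(0, k)`, `(1, k)`, while one with
`c₂ ≤ -1` already holds there with slack `1`. Hence `(1/2, p - k/2) ∈ Q_k^(p)`, which is not in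
`P_k` while `2p < k`. -/

section Polyhedra

variable {n : ℕ} {Q : Set (Fin n → ℝ)}

lemma IsRatPolyhedron.isPolyhedron (hQ : IsRatPolyhedron Q) : IsPolyhedron Q := by
  obtain ⟨m, A, b, rfl⟩ := hQ
  exact ⟨m, fun i j ↦ A i j, fun i ↦ b i, rfl⟩

lemma IsPolyhedron.convex (hQ : IsPolyhedron Q) : Convex ℝ Q := by
  obtain ⟨m, A, b, rfl⟩ := hQ
  simp only [ofPred_forall]
  refine convex_iInter fun i ↦ convex_halfSpace_le ⟨fun x y ↦ ?_, fun t x ↦ ?_⟩ (b i)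
  · simp [rdot, mul_add, Finset.sum_add_distrib]
  · simp [rdot, Finset.mul_sum, mul_left_comm]

end Polyhedra

section ChvatalGomory

variable {n : ℕ} {Q : Set (Fin n → ℝ)}

lemma cgIter_succ (p : ℕ) (Q : Set (Fin n → ℝ)) : cgIter (p + 1) Q = cgClosure (cgIter p Q) :=
  Function.iterate_succ_apply' cgClosure p Q

lemma exists_zdot_eq_intCast {x : Fin n → ℝ} (hx : x ∈ latticePts n) (c : Fin n → ℤ) :
    ∃ z : ℤ, zdot c x = z := by
  choose f hf using hx
  exact ⟨∑ i, c i * f i, by simp [zdot, hf]⟩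

lemma mem_cgIter_of_mem_latticePts {x : Fin n → ℝ} (hxQ : x ∈ Q) (hx : x ∈ latticePts n)
    (p : ℕ) : x ∈ cgIter p Q := by
  induction p with
  | zero => exact hxQ
  | succ p ih =>
    rw [cgIter_succ]
    refine ⟨ih, fun c δ hvalid ↦ ?_⟩
    obtain ⟨z, hz⟩ := exists_zdot_eq_intCast hx c
    have hzδ : (z : ℝ) ≤ δ := hz ▸ hvalid x ih
    rw [hz]
    exact_mod_cast Int.le_floor.mpr hzδ

lemma natCast_le_cgRank {r : ℕ} (h : ∀ m : ℕ, cgIter m Q = intHull Q → r ≤ m) :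
    (r : ℕ∞) ≤ cgRank Q := by
  refine le_sInf ?_
  rintro p ⟨m, rfl, hm⟩
  exact_mod_cast h m hm

end ChvatalGomory

lemma zdot_fin_two (c : Fin 2 → ℤ) (x : Fin 2 → ℝ) : zdot c x = c 0 * x 0 + c 1 * x 1 := by
  simp [zdot, Fin.sum_univ_two]

lemma intCast_vec_mem_latticePts (a b : ℤ) : ![(a : ℝ), b] ∈ latticePts 2 := by
  intro i
  fin_cases i
  exacts [⟨a, rfl⟩, ⟨b, rfl⟩]

lemma half_mem_cgClosure {Q : Set (Fin 2 → ℝ)} {s : ℝ} {t : ℤ} (hst : s ≤ t)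
    (h0 : ![0, (t : ℝ)] ∈ Q) (h1 : ![1, (t : ℝ)] ∈ Q) (hs : ![1 / 2, s] ∈ Q)
    (hs' : ![1 / 2, s - 1] ∈ Q) : ![1 / 2, s] ∈ cgClosure Q := by
  refine ⟨hs, fun c δ hvalid ↦ ?_⟩
  have hv0 := hvalid _ h0
  have hv1 := hvalid _ h1
  have hvs := hvalid _ hs'
  simp only [zdot_fin_two, Matrix.cons_val_zero, Matrix.cons_val_one] at hv0 hv1 hvs ⊢
  rcases le_or_gt 0 (c 1) with hc | hc
  · have i0 : ((c 1 * t : ℤ) : ℝ) ≤ ⌊δ⌋ := by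
      exact_mod_cast Int.le_floor.mpr (by push_cast; linarith)
    have i1 : ((c 0 + c 1 * t : ℤ) : ℝ) ≤ ⌊δ⌋ := by
      exact_mod_cast Int.le_floor.mpr (by push_cast; linarith)
    push_cast at i0 i1
    have hc' : (0 : ℝ) ≤ c 1 := by exact_mod_cast hc
    nlinarith [mul_le_mul_of_nonneg_left hst hc']
  · have hc' : (c 1 : ℝ) ≤ -1 := by exact_mod_cast Int.le_sub_one_of_lt hc
    linarith [Int.sub_one_lt_floor δ]

section PkQk

variable {k : ℕ} {x : Fin 2 → ℝ}

lemma mem_Pk_iff (hk : 0 < k) :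
    x ∈ Pk k ↔ 0 ≤ x 0 ∧ 0 ≤ x 1 ∧ x 1 ≤ k ∧ k * x 0 - x 1 ≤ k := by
  have hk' : (0 : ℝ) < k := by exact_mod_cast hk
  have : x 0 - 1 / k * x 1 = (k * x 0 - x 1) / k := by field_simp
  simp only [Pk, mem_ofPred_eq, this, div_le_one hk']

lemma isPolyhedron_Pk (k : ℕ) : IsPolyhedron (Pk k) := by
  refine ⟨4, ![![-1, 0], ![0, -1], ![0, 1], ![1, -(1 / k)]], ![0, 0, k, 1], ?_⟩
  ext x
  simp [Pk, rdot, Fin.forall_fin_succ, Fin.sum_univ_two]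

lemma isBounded_Pk (hk : 0 < k) : Bornology.IsBounded (Pk k) := by
  have hk' : (0 : ℝ) < k := by exact_mod_cast hk
  refine (Metric.isBounded_Icc 0 ![2, (k : ℝ)]).subset fun x hx ↦ ?_
  obtain ⟨h0, h1, hk1, hk0⟩ := (mem_Pk_iff hk).mp hx
  have : x 0 ≤ 2 := by nlinarith
  refine ⟨fun i ↦ ?_, fun i ↦ ?_⟩ <;> fin_cases i <;> simpa

lemma Pk_subset_intHull (hk : 0 < k) : Pk k ⊆ intHull (Pk k) := by
  have hk' : (0 : ℝ) < k := by exact_mod_cast hk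
  have vertex (a b : ℤ) (h : ![(a : ℝ), b] ∈ Pk k) : ![(a : ℝ), b] ∈ intHull (Pk k) :=
    subset_convexHull ℝ _ ⟨h, intCast_vec_mem_latticePts a b⟩
  have v00 : ![0, 0] ∈ intHull (Pk k) := by simpa using vertex 0 0 (by simp [mem_Pk_iff hk])
  have v10 : ![1, 0] ∈ intHull (Pk k) := by simpa using vertex 1 0 (by simp [mem_Pk_iff hk])
  have v0k : ![0, (k : ℝ)] ∈ intHull (Pk k) := by simpa using vertex 0 k (by simp [mem_Pk_iff hk])
  have v2k : ![2, (k : ℝ)] ∈ intHull (Pk k) := by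
    simpa using vertex 2 k (by simp [mem_Pk_iff hk]; linarith)
  intro x hx
  obtain ⟨h0, h1, h1k, h0k⟩ := (mem_Pk_iff hk).mp hx
  have hconv : Convex ℝ (intHull (Pk k)) := convex_convexHull ℝ _
  -- `x` divides the chord at height `x 1 = t k` between the edges `[(0,0), (0,k)]` and
  -- `[(1,0), (2,k)]` in ratio `l`
  obtain ⟨t, ht0, ht1, htk⟩ : ∃ t : ℝ, 0 ≤ t ∧ t ≤ 1 ∧ t * k = x 1 :=
    ⟨x 1 / k, by positivity, (div_le_one hk').2 h1k, div_mul_cancel₀ _ hk'.ne'⟩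
  obtain ⟨l, hl0, hl1, hlt⟩ : ∃ l : ℝ, 0 ≤ l ∧ l ≤ 1 ∧ l * (1 + t) = x 0 :=
    ⟨x 0 / (1 + t), by positivity, (div_le_one (by linarith)).2 (by nlinarith),
      div_mul_cancel₀ _ (by linarith)⟩
  have hp := hconv v00 v0k (sub_nonneg.2 ht1) ht0 (by ring)
  have hq := hconv v10 v2k (sub_nonneg.2 ht1) ht0 (by ring)
  convert hconv hp hq (sub_nonneg.2 hl1) hl0 (by ring) using 1
  ext i
  fin_cases i <;> simp
  · linear_combination -hlt
  · linear_combination -htk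

lemma isIntegralPolyhedron_Pk (hk : 0 < k) : IsIntegralPolyhedron (Pk k) :=
  ⟨isPolyhedron_Pk k, (Pk_subset_intHull hk).antisymm
    (convexHull_min inter_subset_left (isPolyhedron_Pk k).convex)⟩

-- `P_k` with its facet `x 1 ≥ 0` replaced by `k x 0 + x 1 ≥ 0`: the apex `(1/2, -k/2)` lies on
-- this line and on the line `k x 0 - x 1 = k` of the slanted facet of `P_k`.
def QkIneq (k : ℕ) : Set (Fin 2 → ℝ) :=
  {x | 0 ≤ x 0 ∧ x 1 ≤ k ∧ 0 ≤ k * x 0 + x 1 ∧ k * x 0 - x 1 ≤ k}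

lemma isRatPolyhedron_QkIneq (k : ℕ) : IsRatPolyhedron (QkIneq k) := by
  refine ⟨4, ![![-1, 0], ![0, 1], ![-k, -1], ![k, -1]], ![0, k, 0, k], ?_⟩
  ext x
  simp [QkIneq, Fin.forall_fin_succ, Fin.sum_univ_two, neg_le_iff_add_nonneg']

lemma Qk_eq_QkIneq (hk : 0 < k) : Qk k = QkIneq k := by
  have hk' : (0 : ℝ) < k := by exact_mod_cast hk
  refine (convexHull_min (union_subset (fun x hx ↦ ?_) (singleton_subset_iff.2 ?_))
    (isRatPolyhedron_QkIneq k).isPolyhedron.convex).antisymm fun x ⟨h0, h1k, hlo, hhi⟩ ↦ ?_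
  · obtain ⟨h0, h1, h1k, h0k⟩ := (mem_Pk_iff hk).mp hx
    exact ⟨h0, h1k, by positivity, h0k⟩
  · simp only [QkIneq, mem_ofPred_eq, Matrix.cons_val_zero, Matrix.cons_val_one]
    refine ⟨by norm_num, by linarith, by linarith, by linarith⟩
  rcases le_or_gt 0 (x 1) with h1 | h1
  · exact subset_convexHull ℝ _ (Or.inl ((mem_Pk_iff hk).2 ⟨h0, h1, h1k, hhi⟩))
  have hP (y : Fin 2 → ℝ) (hy : y ∈ Pk k) : y ∈ Qk k := subset_convexHull ℝ _ (Or.inl hy)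
  have v00 := hP ![0, 0] (by simp [mem_Pk_iff hk])
  have v10 := hP ![1, 0] (by simp [mem_Pk_iff hk])
  have apex : ![1 / 2, -(k : ℝ) / 2] ∈ Qk k := subset_convexHull ℝ _ (Or.inr rfl)
  -- barycentric coordinates of `x` in the triangle `(0,0)`, `(1,0)`, `(1/2, -k/2)`
  have hconv : Convex ℝ (Qk k) := convex_convexHull ℝ _
  have hcomb := hconv.sum_mem (t := Finset.univ)
    (w := ![(k - (k * x 0 - x 1)) / k, (k * x 0 + x 1) / k, -2 * x 1 / k])
    (z := ![![0, 0], ![1, 0], ![1 / 2, -(k : ℝ) / 2]]) ?_ ?_ ?_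
  · show x ∈ Qk k
    convert hcomb
    ext i
    fin_cases i <;> simp [Fin.sum_univ_three] <;> field_simp; ring
  · intro i _
    fin_cases i <;> exact div_nonneg (by linarith) hk'.le
  · simp only [Fin.sum_univ_three, Matrix.cons_val]
    field_simp
    ring
  · intro i _
    fin_cases i
    exacts [v00, v10, apex]

lemma Qk_inter_latticePts (hk : 0 < k) : Qk k ∩ latticePts 2 = Pk k ∩ latticePts 2 := by
  refine Subset.antisymm (fun x ⟨hxQ, hx⟩ ↦ ⟨?_, hx⟩)
    (inter_subset_inter_left _ fun y hy ↦ subset_convexHull ℝ _ (Or.inl hy))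
  have hk' : (0 : ℝ) < k := by exact_mod_cast hk
  rw [Qk_eq_QkIneq hk] at hxQ
  obtain ⟨h0, h1k, hlo, hhi⟩ := hxQ
  refine (mem_Pk_iff hk).2 ⟨h0, ?_, h1k, hhi⟩
  obtain ⟨a, ha⟩ := hx 0
  obtain ⟨b, hb⟩ := hx 1
  rw [ha, hb] at hlo hhi
  rw [hb]
  by_contra! hb0
  -- an integer point of `Q_k` with `x 1 ≤ -1` would have `0 < x 0 < 1`
  have hb1 : (b : ℝ) ≤ -1 := by
    have : b < 0 := by exact_mod_cast hb0
    exact_mod_cast Int.le_sub_one_of_lt this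
  have ha0 : (0 : ℝ) < a := by nlinarith
  have ha1 : (a : ℝ) < 1 := by nlinarith
  have : (0 : ℤ) < a := by exact_mod_cast ha0
  have : a < (1 : ℤ) := by exact_mod_cast ha1
  omega

lemma isRelaxation_Pk_Qk (hk : 0 < k) : IsRelaxation (Pk k) (Qk k) :=
  ⟨Qk_eq_QkIneq hk ▸ isRatPolyhedron_QkIneq k, Qk_inter_latticePts hk⟩

lemma intHull_Qk (hk : 0 < k) : intHull (Qk k) = Pk k := by
  rw [intHull, Qk_inter_latticePts hk]
  exact (isIntegralPolyhedron_Pk hk).2.symm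

lemma half_mem_cgIter_Qk (hk : 0 < k) (p : ℕ) {s : ℝ} (hs : -k / 2 + p ≤ s) (hsk : s ≤ k) :
    ![1 / 2, s] ∈ cgIter p (Qk k) := by
  induction p generalizing s with
  | zero =>
    rw [cgIter, Function.iterate_zero_apply, Qk_eq_QkIneq hk]
    simp only [QkIneq, mem_ofPred_eq, Matrix.cons_val_zero, Matrix.cons_val_one]
    push_cast at hs
    refine ⟨by norm_num, hsk, by linarith, by linarith⟩
  | succ p ih =>
    have hQ (a : ℤ) (ha : ![(a : ℝ), k] ∈ Pk k) : ![(a : ℝ), ((k : ℤ) : ℝ)] ∈ cgIter p (Qk k) :=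
      mem_cgIter_of_mem_latticePts (subset_convexHull ℝ _ (Or.inl (by simpa using ha)))
        (intCast_vec_mem_latticePts a k) p
    rw [cgIter_succ]
    push_cast at hs
    exact half_mem_cgClosure (by exact_mod_cast hsk)
      (by simpa using hQ 0 (by simp [mem_Pk_iff hk]))
      (by simpa using hQ 1 (by simp [mem_Pk_iff hk]))
      (ih (by linarith) hsk) (ih (by linarith) (by linarith))

lemma le_two_mul_of_cgIter_Qk_eq_intHull (hk : 0 < k) {m : ℕ}
    (hm : cgIter m (Qk k) = intHull (Qk k)) : k ≤ 2 * m := by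
  by_contra! h
  have h' : (2 * m : ℝ) < k := by exact_mod_cast h
  have hmem := half_mem_cgIter_Qk hk m (s := -k / 2 + m) le_rfl (by linarith)
  rw [hm, intHull_Qk hk, mem_Pk_iff hk] at hmem
  simp only [Matrix.cons_val_zero, Matrix.cons_val_one] at hmem
  linarith [hmem.2.1]

end PkQk

theorem stmt_10 (k : ℕ) (hk : 1 ≤ k) :
    (IsIntegralPolyhedron (Pk k) ∧ Bornology.IsBounded (Pk k)) ∧
    IsRelaxation (Pk k) (Qk k) ∧
    (k : ℕ∞) ≤ 2 * cgRank (Qk k) := by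
  refine ⟨⟨isIntegralPolyhedron_Pk hk, isBounded_Pk hk⟩, isRelaxation_Pk_Qk hk, ?_⟩
  have hrank : (((k + 1) / 2 : ℕ) : ℕ∞) ≤ cgRank (Qk k) := natCast_le_cgRank fun m hm ↦ by
    have := le_two_mul_of_cgIter_Qk_eq_intHull hk hm
    omega
  calc (k : ℕ∞) ≤ ((2 * ((k + 1) / 2) : ℕ) : ℕ∞) := by
        exact_mod_cast (by omega : k ≤ 2 * ((k + 1) / 2))
    _ ≤ 2 * cgRank (Qk k) := by push_cast; gcongr
end
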